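/- For every n ≥ 0, μ^{(1)}_n = q^n · σ(μ^{(1)}_n) in K (i.e., μ^{(1)}_n(q) = q^n μ^{(1)}_n(q^{−1})). -/

import Mathlib

/- Let `K` be the fraction field of `ℚ[q,Q]`, where `Q` plays the role of `q^ν`.
`θ1ν` and `θ1ν1` are the series `θ^{(1)}_ν` and `θ^{(1)}_{ν+1}` of Jackson's
`q`-Bessel function `J^{(1)}_ν`, and `μ1 n` are the coefficients of
`θ^{(1)}_{ν+1}/θ^{(1)}_ν`. -/

noncomputable section

abbrev K : Type := FractionRing (MvPolynomial (Fin 2) ℚ)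

def qv : K := algebraMap (MvPolynomial (Fin 2) ℚ) K (MvPolynomial.X 0)

def Qv : K := algebraMap (MvPolynomial (Fin 2) ℚ) K (MvPolynomial.X 1)

/-- The q-Pochhammer symbol `(a;q)_n`. -/
def qPoch (a : K) (n : ℕ) : K := ∏ j ∈ Finset.range n, (1 - a * qv ^ j)

/-- `[ν+k]_q = (1 - Q q^k)/(1-q)`. -/
def brk (k : ℕ) : K := (1 - Qv * qv ^ k) / (1 - qv)

/-- `[ν]_q = (1 - Q)/(1-q)`. -/
def brNu : K := (1 - Qv) / (1 - qv)

/-- `θ^{(1)}_ν(x)`. -/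
def θ1ν : PowerSeries K :=
  PowerSeries.mk fun n =>
    (-1) ^ n * (1 - qv) ^ (2 * n) / (qPoch qv n * qPoch (Qv * qv) n)

/-- `θ^{(1)}_{ν+1}(x)`. -/
def θ1ν1 : PowerSeries K :=
  PowerSeries.mk fun n =>
    (-1) ^ n * (1 - qv) ^ (2 * n) / (qPoch qv n * qPoch (Qv * qv ^ 2) n)

/-- The coefficients `μ^{(1)}_n` of `θ^{(1)}_{ν+1}(x)/θ^{(1)}_ν(x)`. -/
def μ1 (n : ℕ) : K := PowerSeries.coeff n (θ1ν1 * θ1ν⁻¹)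

/- Put `A = θ^{(1)}_ν`, `B = θ^{(1)}_{ν+1}` and `T f(x) = f^σ(q x)`, a ring endomorphism of
`K⟦x⟧`; the claim is `T (B/A) = B/A`. The Pochhammer recurrences give a first-order
`q`-difference system for `(A, B)`, and applying `σ` to them one for `(T A, T B)`. Eliminating
between the two systems, the Casoratian `W = T B · A - T A · B` satisfies `W(x) = Q q W(q x)`;
as `Q q^{n+1} ≠ 1`, every coefficient of `W` vanishes, i.e. `T B / T A = B / A`. -/

open PowerSeries

namespace PowerSeries

variable {R : Type*} [CommRing R] [IsDomain R]

theorem eq_zero_of_eq_C_mul_rescale {a c : R} (h : ∀ n, a * c ^ n ≠ 1) {f : R⟦X⟧}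
    (hf : f = C a * rescale c f) : f = 0 := by
  ext n
  have hfn := congrArg (coeff n) hf
  rw [coeff_C_mul, coeff_rescale] at hfn
  have hn : (1 - a * c ^ n) * coeff n f = 0 := by linear_combination hfn
  simpa [sub_ne_zero.mpr (h n).symm] using hn

theorem mul_eq_mul_of_qDifference {p q c : R} (hpq : ∀ n, p * q ^ n ≠ 1) {A B A' B' : R⟦X⟧}
    (hB : B = C p * rescale q B + C (1 - p) * A)
    (hA : C (1 - p) * rescale q A = C (1 - p) * A + C c * (X * B))
    (hB' : B' = C p * rescale q B' + C (1 - p) * rescale q A')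
    (hA' : C (1 - p) * rescale q A' = C (1 - p) * A' + C (c * p) * (X * rescale q B')) :
    B' * A = A' * B := by
  have hu : C (1 - p) ≠ 0 :=
    (map_ne_zero_iff _ C_injective).mpr (sub_ne_zero.mpr (by simpa using (hpq 0).symm))
  have hW : C (1 - p) * (B' * A - A' * B)
      = C (1 - p) * (C p * rescale q (B' * A - A' * B)) := by
    simp only [map_sub, map_mul, map_one] at hA hB hA' hB' ⊢
    linear_combination (C p * rescale q B' - B') * hB - C p * rescale q B' * hA
      + (B - C p * rescale q B) * hB' + B * hA'
  exact sub_eq_zero.mp (eq_zero_of_eq_C_mul_rescale hpq (mul_left_cancel₀ hu hW))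

theorem apply_mul_inv_eq_self {k : Type*} [Field k] (T : k⟦X⟧ →+* k⟦X⟧)
    {A B : k⟦X⟧} (hA : constantCoeff A ≠ 0) (h : T B * A = T A * B) :
    T (B * A⁻¹) = B * A⁻¹ := by
  have hAA := PowerSeries.mul_inv_cancel A hA
  have hTA : T A * T A⁻¹ = 1 := by rw [← map_mul, hAA, map_one]
  calc T (B * A⁻¹) = T B * T A⁻¹ * (A * A⁻¹) := by rw [map_mul, hAA, mul_one]
    _ = (T A * T A⁻¹) * (B * A⁻¹) := by linear_combination T A⁻¹ * A⁻¹ * h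
    _ = B * A⁻¹ := by rw [hTA, one_mul]

end PowerSeries

theorem qv_ne_zero : qv ≠ 0 :=
  (map_ne_zero_iff _ (IsFractionRing.injective _ K)).mpr (MvPolynomial.X_ne_zero 0)

theorem Qv_ne_zero : Qv ≠ 0 :=
  (map_ne_zero_iff _ (IsFractionRing.injective _ K)).mpr (MvPolynomial.X_ne_zero 1)

theorem Qv_pow_mul_qv_pow_ne_one (i j : ℕ) (h : i + j ≠ 0) : Qv ^ i * qv ^ j ≠ 1 := by
  intro h1
  have hp : (MvPolynomial.X 1 ^ i * MvPolynomial.X 0 ^ j : MvPolynomial (Fin 2) ℚ) = 1 := by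
    apply IsFractionRing.injective _ K
    simpa [qv, Qv] using h1
  have := congrArg (MvPolynomial.eval 0) hp
  rcases Nat.eq_zero_or_pos i with rfl | hi
  · simp [zero_pow (by omega : j ≠ 0)] at this
  · simp [zero_pow hi.ne'] at this

theorem qPoch_ne_zero {a : K} (h : ∀ j, a * qv ^ j ≠ 1) (n : ℕ) : qPoch a n ≠ 0 :=
  Finset.prod_ne_zero_iff.mpr fun j _ => sub_ne_zero.mpr (h j).symm

theorem qPoch_succ (a : K) (n : ℕ) : qPoch a (n + 1) = qPoch a n * (1 - a * qv ^ n) :=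
  Finset.prod_range_succ _ n

theorem qPoch_succ' (a : K) (n : ℕ) : qPoch a (n + 1) = (1 - a) * qPoch (a * qv) n := by
  simp only [qPoch, Finset.prod_range_succ', pow_succ, pow_zero, mul_one, mul_assoc, mul_comm]

theorem Qv_mul_qv_mul_qv_pow_ne_one (n : ℕ) : Qv * qv * qv ^ n ≠ 1 := by
  simpa [pow_succ', mul_assoc] using Qv_pow_mul_qv_pow_ne_one 1 (n + 1) (by omega)

theorem qPoch_qv_ne_zero (n : ℕ) : qPoch qv n ≠ 0 := by
  refine qPoch_ne_zero (fun j => ?_) n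
  simpa [pow_succ'] using Qv_pow_mul_qv_pow_ne_one 0 (j + 1) (by omega)

theorem qPoch_Qv_mul_qv_ne_zero (n : ℕ) : qPoch (Qv * qv) n ≠ 0 :=
  qPoch_ne_zero Qv_mul_qv_mul_qv_pow_ne_one n

theorem qPoch_Qv_mul_qv_sq_ne_zero (n : ℕ) : qPoch (Qv * qv ^ 2) n ≠ 0 := by
  refine qPoch_ne_zero (fun j => ?_) n
  simpa [pow_succ', mul_assoc] using Qv_mul_qv_mul_qv_pow_ne_one (j + 1)

theorem qPoch_Qv_mul_qv_mul (n : ℕ) :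
    qPoch (Qv * qv) n * (1 - Qv * qv * qv ^ n) = (1 - Qv * qv) * qPoch (Qv * qv ^ 2) n := by
  rw [← qPoch_succ, qPoch_succ', mul_assoc, ← sq]

theorem coeff_θ1ν (n : ℕ) :
    coeff n θ1ν = (-1) ^ n * (1 - qv) ^ (2 * n) / (qPoch qv n * qPoch (Qv * qv) n) :=
  coeff_mk _ _

theorem coeff_θ1ν1 (n : ℕ) :
    coeff n θ1ν1 = (-1) ^ n * (1 - qv) ^ (2 * n) / (qPoch qv n * qPoch (Qv * qv ^ 2) n) :=
  coeff_mk _ _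

theorem coeff_θ1ν1_mul (n : ℕ) :
    coeff n θ1ν1 * (1 - Qv * qv * qv ^ n) = (1 - Qv * qv) * coeff n θ1ν := by
  rw [coeff_θ1ν, coeff_θ1ν1, div_mul_eq_mul_div, mul_div_assoc',
    div_eq_div_iff (mul_ne_zero (qPoch_qv_ne_zero n) (qPoch_Qv_mul_qv_sq_ne_zero n))
      (mul_ne_zero (qPoch_qv_ne_zero n) (qPoch_Qv_mul_qv_ne_zero n))]
  linear_combination (-1) ^ n * (1 - qv) ^ (2 * n) * qPoch qv n * qPoch_Qv_mul_qv_mul n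

theorem coeff_θ1ν_succ (n : ℕ) :
    (1 - qv) ^ 2 * coeff n θ1ν1 = (1 - Qv * qv) * (qv ^ (n + 1) - 1) * coeff (n + 1) θ1ν := by
  have hq : 1 - qv * qv ^ n ≠ 0 := by
    rw [sub_ne_zero, ne_comm, ← pow_succ']
    simpa using Qv_pow_mul_qv_pow_ne_one 0 (n + 1) (by omega)
  have hp : 1 - Qv * qv * qv ^ n ≠ 0 := sub_ne_zero.mpr (Qv_mul_qv_mul_qv_pow_ne_one n).symm
  rw [coeff_θ1ν, coeff_θ1ν1, qPoch_succ, qPoch_succ, mul_div_assoc', mul_div_assoc',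
    div_eq_div_iff (mul_ne_zero (qPoch_qv_ne_zero n) (qPoch_Qv_mul_qv_sq_ne_zero n))
      (mul_ne_zero (mul_ne_zero (qPoch_qv_ne_zero n) hq)
        (mul_ne_zero (qPoch_Qv_mul_qv_ne_zero n) hp))]
  linear_combination (-1) ^ n * (1 - qv) ^ (2 * n + 2) * qPoch qv n * (1 - qv * qv ^ n)
    * qPoch_Qv_mul_qv_mul n

theorem θ1ν1_qDiff :
    θ1ν1 = C (Qv * qv) * rescale qv θ1ν1 + C (1 - Qv * qv) * θ1ν := by
  ext n
  simp only [map_add, coeff_C_mul, coeff_rescale]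
  linear_combination coeff_θ1ν1_mul n

theorem θ1ν_qDiff :
    C (1 - Qv * qv) * rescale qv θ1ν = C (1 - Qv * qv) * θ1ν + C ((1 - qv) ^ 2) * (X * θ1ν1) := by
  ext n
  simp only [map_add, coeff_C_mul, coeff_rescale]
  rcases n with _ | n
  · simp
  · rw [coeff_succ_X_mul]
    linear_combination -coeff_θ1ν_succ n

def twist (σ : K →+* K) : K⟦X⟧ →+* K⟦X⟧ := (rescale qv).comp (map σ)

theorem coeff_twist (σ : K →+* K) (n : ℕ) (f : K⟦X⟧) :
    coeff n (twist σ f) = qv ^ n * σ (coeff n f) := by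
  simp [twist, coeff_rescale, coeff_map]

section Inversion

variable {σ : K →+* K} (hq : σ qv = qv⁻¹) (hQ : σ Qv = Qv⁻¹)
include hq hQ

theorem coeff_twist_θ1ν1_mul (n : ℕ) :
    coeff n (twist σ θ1ν1) * (1 - Qv * qv * qv ^ n)
      = (1 - Qv * qv) * qv ^ n * coeff n (twist σ θ1ν) := by
  have h := congrArg σ (coeff_θ1ν1_mul n)
  simp only [map_mul, map_sub, map_one, map_pow, hq, hQ, inv_pow] at h
  rw [coeff_twist, coeff_twist]
  field_simp [qv_ne_zero, Qv_ne_zero] at h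
  linear_combination -qv ^ n * h

theorem coeff_twist_θ1ν_succ (n : ℕ) :
    (1 - qv) ^ 2 * (Qv * qv) * qv ^ n * coeff n (twist σ θ1ν1)
      = (1 - Qv * qv) * (qv ^ (n + 1) - 1) * coeff (n + 1) (twist σ θ1ν) := by
  have h := congrArg σ (coeff_θ1ν_succ n)
  simp only [map_mul, map_sub, map_one, map_pow, hq, hQ, inv_pow] at h
  rw [coeff_twist, coeff_twist]
  field_simp [qv_ne_zero, Qv_ne_zero] at h
  linear_combination qv ^ n * h

theorem twist_θ1ν1_qDiff :
    twist σ θ1ν1 = C (Qv * qv) * rescale qv (twist σ θ1ν1)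
      + C (1 - Qv * qv) * rescale qv (twist σ θ1ν) := by
  ext n
  simp only [map_add, coeff_C_mul, coeff_rescale]
  linear_combination coeff_twist_θ1ν1_mul hq hQ n

theorem twist_θ1ν_qDiff :
    C (1 - Qv * qv) * rescale qv (twist σ θ1ν) = C (1 - Qv * qv) * twist σ θ1ν
      + C ((1 - qv) ^ 2 * (Qv * qv)) * (X * rescale qv (twist σ θ1ν1)) := by
  ext n
  simp only [map_add, coeff_C_mul, coeff_rescale]
  rcases n with _ | n
  · simp
  · rw [coeff_succ_X_mul, coeff_rescale]
    linear_combination -coeff_twist_θ1ν_succ hq hQ n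

end Inversion

theorem constantCoeff_θ1ν : constantCoeff θ1ν = 1 := by
  simp [← coeff_zero_eq_constantCoeff_apply, coeff_θ1ν, qPoch]

/-- Equation (3.10): `μ^{(1)}_n(q) = q^n μ^{(1)}_n(q⁻¹)`, i.e. `μ^{(1)}_n = q^n σ(μ^{(1)}_n)`,
where `σ` is the field automorphism of `K` determined by `σ(q) = q⁻¹`, `σ(Q) = Q⁻¹`. -/
theorem mu1_q_inv (σ : K ≃+* K) (hq : σ qv = qv⁻¹) (hQ : σ Qv = Qv⁻¹) :
    ∀ n : ℕ, μ1 n = qv ^ n * σ (μ1 n) := by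
  have hcasoratian : twist σ θ1ν1 * θ1ν = twist σ θ1ν * θ1ν1 :=
    mul_eq_mul_of_qDifference Qv_mul_qv_mul_qv_pow_ne_one θ1ν1_qDiff θ1ν_qDiff
      (twist_θ1ν1_qDiff hq hQ) (twist_θ1ν_qDiff hq hQ)
  have hfix : twist σ (θ1ν1 * θ1ν⁻¹) = θ1ν1 * θ1ν⁻¹ :=
    apply_mul_inv_eq_self _ (by rw [constantCoeff_θ1ν]; exact one_ne_zero) hcasoratian
  intro n
  conv_lhs => rw [μ1, ← hfix, coeff_twist]
  rfl

end
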